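/- arXiv:2401.15470 — 3 statements merged into one kernel-verified Lean document; each statement's English description precedes it below -/
import Mathlib

section
/- For any vectors λ, μ ∈ ℝⁿ and real r ≥ 2, there is a constant C_r > 0 depending only on r such that | |λ|^{r-2} λ - |μ|^{r-2} μ | ≤ C_r (|λ| + |μ|)^{r-2} |λ - μ|. -/
/-!
Write `x ↦ ‖x‖ ^ s • x` with `s = r - 2 ≥ 0` and assume `‖y‖ ≤ ‖x‖`. Splitting
`‖x‖^s • x - ‖y‖^s • y = ‖x‖^s • (x - y) + (‖x‖^s - ‖y‖^s) • y`, the first term is at most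
`(‖x‖ + ‖y‖)^s ‖x - y‖`. For the second, the mean value theorem gives
`‖x‖^s - ‖y‖^s = s c^(s-1) (‖x‖ - ‖y‖)` with `‖y‖ < c < ‖x‖`, and the factor `‖y‖ ≤ c` absorbs the
negative power: `c^(s-1) ‖y‖ ≤ c^s ≤ (‖x‖ + ‖y‖)^s`. This gives the constant `C = 1 + s = r - 1`.
-/

open Real

lemma rpow_sub_rpow_mul_le {s a b : ℝ} (hs : 0 ≤ s) (hb : 0 ≤ b) (hba : b ≤ a) :
    (a ^ s - b ^ s) * b ≤ s * (a + b) ^ s * (a - b) := by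
  rcases hba.eq_or_lt with rfl | hlt
  · simp
  rcases hb.eq_or_lt with rfl | hb0
  · simp only [sub_zero, mul_zero, add_zero]
    positivity
  obtain ⟨c, ⟨hbc, hca⟩, hslope⟩ := exists_hasDerivAt_eq_slope (fun x => x ^ s)
    (fun x => s * x ^ (s - 1)) hlt
    (fun x _ => (continuousAt_rpow_const x s (Or.inr hs)).continuousWithinAt)
    (fun x hx => hasDerivAt_rpow_const (Or.inl (hb0.trans hx.1).ne'))
  have hc0 : 0 < c := hb0.trans hbc
  have hmvt : a ^ s - b ^ s = s * c ^ (s - 1) * (a - b) := by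
    rw [hslope, div_mul_cancel₀ _ (sub_ne_zero.mpr hlt.ne')]
  have hc_pow : c ^ (s - 1) * b ≤ (a + b) ^ s :=
    calc c ^ (s - 1) * b ≤ c ^ (s - 1) * c := by gcongr
      _ = c ^ s := by rw [← rpow_add_one hc0.ne', sub_add_cancel]
      _ ≤ (a + b) ^ s := by gcongr; linarith
  calc (a ^ s - b ^ s) * b = s * (c ^ (s - 1) * b) * (a - b) := by rw [hmvt]; ring
    _ ≤ s * (a + b) ^ s * (a - b) := by gcongr

section NormedSpace

variable {E : Type*} [SeminormedAddCommGroup E] [NormedSpace ℝ E]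

lemma norm_rpow_smul_sub_rpow_smul_le_of_norm_le {s : ℝ} (hs : 0 ≤ s) {x y : E}
    (hyx : ‖y‖ ≤ ‖x‖) :
    ‖‖x‖ ^ s • x - ‖y‖ ^ s • y‖ ≤ (1 + s) * (‖x‖ + ‖y‖) ^ s * ‖x - y‖ := by
  have hsplit : ‖x‖ ^ s • x - ‖y‖ ^ s • y = ‖x‖ ^ s • (x - y) + (‖x‖ ^ s - ‖y‖ ^ s) • y := by
    simp only [smul_sub, sub_smul, sub_add_sub_cancel]
  have hpow : ‖x‖ ^ s ≤ (‖x‖ + ‖y‖) ^ s := by gcongr; linarith [norm_nonneg y]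
  have hdiff : 0 ≤ ‖x‖ ^ s - ‖y‖ ^ s := sub_nonneg.mpr (by gcongr)
  calc ‖‖x‖ ^ s • x - ‖y‖ ^ s • y‖
      ≤ ‖x‖ ^ s * ‖x - y‖ + (‖x‖ ^ s - ‖y‖ ^ s) * ‖y‖ := by
        rw [hsplit]
        refine (norm_add_le _ _).trans_eq ?_
        rw [norm_smul, norm_smul, norm_of_nonneg (by positivity), norm_of_nonneg hdiff]
    _ ≤ (‖x‖ + ‖y‖) ^ s * ‖x - y‖ + s * (‖x‖ + ‖y‖) ^ s * ‖x - y‖ := by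
        refine add_le_add (by gcongr) ?_
        calc (‖x‖ ^ s - ‖y‖ ^ s) * ‖y‖ ≤ s * (‖x‖ + ‖y‖) ^ s * (‖x‖ - ‖y‖) :=
              rpow_sub_rpow_mul_le hs (norm_nonneg y) hyx
          _ ≤ s * (‖x‖ + ‖y‖) ^ s * ‖x - y‖ := by gcongr; exact norm_sub_norm_le x y
    _ = (1 + s) * (‖x‖ + ‖y‖) ^ s * ‖x - y‖ := by ring

lemma norm_rpow_smul_sub_rpow_smul_le {s : ℝ} (hs : 0 ≤ s) (x y : E) :
    ‖‖x‖ ^ s • x - ‖y‖ ^ s • y‖ ≤ (1 + s) * (‖x‖ + ‖y‖) ^ s * ‖x - y‖ := by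
  rcases le_total ‖y‖ ‖x‖ with hyx | hxy
  · exact norm_rpow_smul_sub_rpow_smul_le_of_norm_le hs hyx
  · simpa only [norm_sub_rev, add_comm ‖y‖] using
      norm_rpow_smul_sub_rpow_smul_le_of_norm_le hs hxy

end NormedSpace

/-- Lemma 2.9 (second inequality): for any vectors `l, m ∈ ℝⁿ` and real `r ≥ 2`,
there is a constant `C > 0` depending only on `r` such that
`| |l|^{r-2} l - |m|^{r-2} m | ≤ C (|l| + |m|)^{r-2} |l - m|`. -/
theorem stmt1 (r : ℝ) (hr : 2 ≤ r) :
    ∃ C : ℝ, 0 < C ∧ ∀ (n : ℕ) (l m : EuclideanSpace ℝ (Fin n)),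
      ‖(‖l‖ ^ (r - 2)) • l - (‖m‖ ^ (r - 2)) • m‖
        ≤ C * (‖l‖ + ‖m‖) ^ (r - 2) * ‖l - m‖ := by
  have hs : 0 ≤ r - 2 := by linarith
  exact ⟨1 + (r - 2), by linarith, fun _ l m => norm_rpow_smul_sub_rpow_smul_le hs l m⟩
end

section
/- For any vectors λ, μ ∈ ℝⁿ and real r ≥ 2, there is a constant c_r > 0 depending only on r such that the inner product ⟨|λ|^{r-2} λ - |μ|^{r-2} μ, λ - μ⟩ ≥ c_r |λ - μ|^r. -/
open scoped RealInnerProductSpace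

/-!
With `p = r - 2`, expanding the inner product and `‖x - y‖² = ‖x‖² + ‖y‖² - 2⟪x, y⟫` gives
`⟪‖x‖ᵖ x - ‖y‖ᵖ y, x - y⟫ = (‖x‖ᵖ + ‖y‖ᵖ)/2 · ‖x - y‖² + (‖x‖ᵖ - ‖y‖ᵖ)(‖x‖² - ‖y‖²)/2`,
and the last term is nonnegative because both factors have the sign of `‖x‖ - ‖y‖`.
Since `‖x - y‖ ≤ ‖x‖ + ‖y‖ ≤ 2 max ‖x‖ ‖y‖`, we have `‖x - y‖ᵖ ≤ 2ᵖ (‖x‖ᵖ + ‖y‖ᵖ)`,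
so the inner product is at least `2^(1 - r) ‖x - y‖ʳ`.
-/

lemma Real.add_rpow_le_two_rpow_mul_add_rpow {a b p : ℝ} (ha : 0 ≤ a) (hb : 0 ≤ b)
    (hp : 0 ≤ p) : (a + b) ^ p ≤ 2 ^ p * (a ^ p + b ^ p) := by
  have hmax : a + b ≤ 2 * max a b := by linarith [le_max_left a b, le_max_right a b]
  have hmax_rpow : max a b ^ p ≤ a ^ p + b ^ p := by
    rcases max_cases a b with ⟨h, -⟩ | ⟨h, -⟩ <;> rw [h] <;>
      linarith [Real.rpow_nonneg ha p, Real.rpow_nonneg hb p]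
  calc (a + b) ^ p ≤ (2 * max a b) ^ p := by gcongr
    _ = 2 ^ p * max a b ^ p := Real.mul_rpow zero_le_two (ha.trans (le_max_left a b))
    _ ≤ 2 ^ p * (a ^ p + b ^ p) := by gcongr

lemma norm_sub_rpow_le_two_rpow_mul {E : Type*} [SeminormedAddCommGroup E] {p : ℝ}
    (hp : 0 ≤ p) (x y : E) : ‖x - y‖ ^ p ≤ 2 ^ p * (‖x‖ ^ p + ‖y‖ ^ p) :=
  (Real.rpow_le_rpow (norm_nonneg _) (norm_sub_le x y) hp).trans
    (Real.add_rpow_le_two_rpow_mul_add_rpow (norm_nonneg x) (norm_nonneg y) hp)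

section InnerProductSpace

variable {E : Type*} [NormedAddCommGroup E] [InnerProductSpace ℝ E]

lemma inner_rpow_norm_smul_sub_eq (p : ℝ) (x y : E) :
    ⟪‖x‖ ^ p • x - ‖y‖ ^ p • y, x - y⟫ =
      (‖x‖ ^ p + ‖y‖ ^ p) / 2 * ‖x - y‖ ^ 2 +
        (‖x‖ ^ p - ‖y‖ ^ p) * (‖x‖ ^ 2 - ‖y‖ ^ 2) / 2 := by
  rw [norm_sub_sq_real]
  simp only [inner_sub_left, inner_sub_right, real_inner_smul_left,
    real_inner_self_eq_norm_sq, real_inner_comm x y]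
  ring

lemma half_add_rpow_norm_mul_sq_le_inner {p : ℝ} (hp : 0 ≤ p) (x y : E) :
    (‖x‖ ^ p + ‖y‖ ^ p) / 2 * ‖x - y‖ ^ 2 ≤ ⟪‖x‖ ^ p • x - ‖y‖ ^ p • y, x - y⟫ := by
  have hsign : 0 ≤ (‖x‖ ^ p - ‖y‖ ^ p) * (‖x‖ ^ 2 - ‖y‖ ^ 2) := by
    rcases le_total ‖x‖ ‖y‖ with h | h
    · have h₁ : ‖x‖ ^ p ≤ ‖y‖ ^ p := Real.rpow_le_rpow (norm_nonneg x) h hp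
      have h₂ : ‖x‖ ^ 2 ≤ ‖y‖ ^ 2 := pow_le_pow_left₀ (norm_nonneg x) h 2
      nlinarith
    · have h₁ : ‖y‖ ^ p ≤ ‖x‖ ^ p := Real.rpow_le_rpow (norm_nonneg y) h hp
      have h₂ : ‖y‖ ^ 2 ≤ ‖x‖ ^ 2 := pow_le_pow_left₀ (norm_nonneg y) h 2
      nlinarith
  rw [inner_rpow_norm_smul_sub_eq]
  linarith

lemma two_rpow_mul_norm_sub_rpow_le_inner {r : ℝ} (hr : 2 ≤ r) (x y : E) :
    2 ^ (1 - r) * ‖x - y‖ ^ r ≤ ⟪‖x‖ ^ (r - 2) • x - ‖y‖ ^ (r - 2) • y, x - y⟫ := by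
  have hp : 0 ≤ r - 2 := by linarith
  have hsplit : ‖x - y‖ ^ r = ‖x - y‖ ^ (r - 2) * ‖x - y‖ ^ 2 := by
    rw [← Real.rpow_two, ← Real.rpow_add' (norm_nonneg _) (by linarith), sub_add_cancel]
  have htwo : (2 : ℝ) ^ (1 - r) * 2 ^ (r - 2) = 1 / 2 := by
    rw [← Real.rpow_add two_pos, show 1 - r + (r - 2) = -1 by ring, Real.rpow_neg_one]
    norm_num
  calc 2 ^ (1 - r) * ‖x - y‖ ^ r
      = 2 ^ (1 - r) * ‖x - y‖ ^ (r - 2) * ‖x - y‖ ^ 2 := by rw [hsplit, mul_assoc]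
    _ ≤ 2 ^ (1 - r) * (2 ^ (r - 2) * (‖x‖ ^ (r - 2) + ‖y‖ ^ (r - 2))) * ‖x - y‖ ^ 2 := by
        gcongr
        exact norm_sub_rpow_le_two_rpow_mul hp x y
    _ = (‖x‖ ^ (r - 2) + ‖y‖ ^ (r - 2)) / 2 * ‖x - y‖ ^ 2 := by
        rw [← mul_assoc, htwo]
        ring
    _ ≤ ⟪‖x‖ ^ (r - 2) • x - ‖y‖ ^ (r - 2) • y, x - y⟫ :=
        half_add_rpow_norm_mul_sq_le_inner hp x y

end InnerProductSpace

/-- Lemma 2.9 (fourth inequality, strong monotonicity): for any vectors `l, m ∈ ℝⁿ`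
and real `r ≥ 2`, there is a constant `c > 0` depending only on `r` with
`⟨|l|^{r-2} l - |m|^{r-2} m, l - m⟩ ≥ c |l - m|^r`. -/
theorem stmt2 (r : ℝ) (hr : 2 ≤ r) :
    ∃ c : ℝ, 0 < c ∧ ∀ (n : ℕ) (l m : EuclideanSpace ℝ (Fin n)),
      ⟪(‖l‖ ^ (r - 2)) • l - (‖m‖ ^ (r - 2)) • m, l - m⟫ ≥ c * ‖l - m‖ ^ r :=
  ⟨2 ^ (1 - r), by positivity, fun _ l m => two_rpow_mul_norm_sub_rpow_le_inner hr l m⟩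
end

section
/- For any vectors λ, μ ∈ ℝⁿ and real r ≥ 4, there is a constant C_r > 0 depending only on r such that | |λ|^{r-2} - |μ|^{r-2} - (r-2)|μ|^{r-4} ⟨μ, λ-μ⟩ | ≤ C_r (|λ|^{r-4} + |μ|^{r-4}) |λ - μ|². -/
open scoped RealInnerProductSpace

/-!
Write `a = ‖m‖`, `b = ‖l‖` and `s = r - 2`. The left-hand side splits into the radial remainder
`b^s - a^s - s a^{s-1} (b - a)` of the scalar map `t ↦ t^s` and the angular term
`s a^{s-2} (a b - ⟪m, l⟫)`. The first is bounded by `s (s-1) max(a,b)^{s-2} (b-a)^2` through the mean value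
inequality applied twice (once to `t^s`, once to its derivative), and `(b - a)^2 ≤ ‖l - m‖^2`; the second
is nonnegative and at most `s a^{s-2} ‖l - m‖^2 / 2` by the polarization identity.
-/

open Set in
theorem Real.abs_rpow_sub_rpow_le {p x y : ℝ} (hp : 1 ≤ p) (hx : 0 ≤ x) (hy : 0 ≤ y) :
    |x ^ p - y ^ p| ≤ p * max x y ^ (p - 1) * |x - y| := by
  have hmem : ∀ t ∈ uIcc y x, 0 ≤ t := fun t ht => (le_min hy hx).trans ht.1
  refine (convex_uIcc y x).norm_image_sub_le_of_norm_hasDerivWithin_le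
    (f := fun t => t ^ p) (fun t _ => (Real.hasDerivAt_rpow_const (Or.inr hp)).hasDerivWithinAt)
    (fun t ht => ?_) left_mem_uIcc right_mem_uIcc
  have htmax : t ≤ max x y := max_comm y x ▸ ht.2
  rw [Real.norm_eq_abs, abs_of_nonneg (by have := hmem t ht; positivity)]
  gcongr
  exact hmem t ht

open Set in
theorem Real.abs_rpow_sub_rpow_sub_mul_le {s a b : ℝ} (hs : 2 ≤ s) (ha : 0 ≤ a) (hb : 0 ≤ b) :
    |b ^ s - a ^ s - s * a ^ (s - 1) * (b - a)| ≤ s * (s - 1) * max a b ^ (s - 2) * (b - a) ^ 2 := by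
  have hmem : ∀ t ∈ uIcc a b, 0 ≤ t := fun t ht => (le_min ha hb).trans ht.1
  have hderiv_bound : ∀ t ∈ uIcc a b,
      ‖s * t ^ (s - 1) - s * a ^ (s - 1)‖ ≤ s * (s - 1) * max a b ^ (s - 2) * |b - a| := by
    intro t ht
    have hmax : max t a ≤ max a b := max_le ht.2 le_sup_left
    calc ‖s * t ^ (s - 1) - s * a ^ (s - 1)‖ = s * |t ^ (s - 1) - a ^ (s - 1)| := by
          rw [Real.norm_eq_abs, ← mul_sub, abs_mul, abs_of_nonneg (by linarith)]
      _ ≤ s * ((s - 1) * max t a ^ (s - 1 - 1) * |t - a|) := by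
          gcongr
          exact Real.abs_rpow_sub_rpow_le (by linarith) (hmem t ht) ha
      _ ≤ s * (s - 1) * max a b ^ (s - 2) * |b - a| := by
          rw [show s - 1 - 1 = s - 2 by ring, ← mul_assoc, ← mul_assoc]
          have : 0 ≤ s * (s - 1) := by nlinarith
          gcongr s * (s - 1) * ?_ * ?_
          · exact Real.rpow_le_rpow (le_max_of_le_left (hmem t ht)) hmax (by linarith)
          · exact abs_sub_left_of_mem_uIcc ht
  -- the mean value inequality for `t ↦ t ^ s - s a ^ (s - 1) t`, whose derivative vanishes at `a`
  have h := (convex_uIcc a b).norm_image_sub_le_of_norm_hasDerivWithin_le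
    (f := fun t => t ^ s - s * a ^ (s - 1) * t)
    (fun t _ => ((Real.hasDerivAt_rpow_const (Or.inr (by linarith))).sub
      ((hasDerivAt_id t).const_mul _)).hasDerivWithinAt)
    (by simpa only [mul_one] using hderiv_bound) left_mem_uIcc right_mem_uIcc
  rw [Real.norm_eq_abs, Real.norm_eq_abs] at h
  calc _ = |b ^ s - s * a ^ (s - 1) * b - (a ^ s - s * a ^ (s - 1) * a)| := by ring_nf
    _ ≤ _ := h
    _ = _ := by rw [mul_assoc, ← pow_two, sq_abs]

theorem two_mul_norm_mul_norm_sub_inner_le {E : Type*} [NormedAddCommGroup E]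
    [InnerProductSpace ℝ E] (x y : E) : 2 * (‖x‖ * ‖y‖ - ⟪x, y⟫) ≤ ‖x - y‖ ^ 2 := by
  nlinarith [norm_sub_sq_real x y, sq_nonneg (‖x‖ - ‖y‖)]

theorem abs_norm_rpow_sub_norm_rpow_sub_inner_le {E : Type*} [NormedAddCommGroup E]
    [InnerProductSpace ℝ E] {s : ℝ} (hs : 2 ≤ s) (l m : E) :
    |‖l‖ ^ s - ‖m‖ ^ s - s * ‖m‖ ^ (s - 2) * ⟪m, l - m⟫|
      ≤ s * (2 * s - 1) / 2 * max ‖m‖ ‖l‖ ^ (s - 2) * ‖l - m‖ ^ 2 := by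
  set M := max ‖m‖ ‖l‖ ^ (s - 2)
  have hM0 : 0 ≤ M := by positivity
  have hs0 : 0 ≤ s := by linarith
  have hm : ‖m‖ ^ (s - 1) = ‖m‖ ^ (s - 2) * ‖m‖ := by
    rw [← Real.rpow_add_one' (norm_nonneg m) (by linarith)]
    ring_nf
  have hsplit : ‖l‖ ^ s - ‖m‖ ^ s - s * ‖m‖ ^ (s - 2) * ⟪m, l - m⟫
      = (‖l‖ ^ s - ‖m‖ ^ s - s * ‖m‖ ^ (s - 1) * (‖l‖ - ‖m‖))
        + s * ‖m‖ ^ (s - 2) * (‖m‖ * ‖l‖ - ⟪m, l⟫) := by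
    rw [hm, inner_sub_right, real_inner_self_eq_norm_sq]
    ring
  have hradial : |‖l‖ ^ s - ‖m‖ ^ s - s * ‖m‖ ^ (s - 1) * (‖l‖ - ‖m‖)|
      ≤ s * (s - 1) * M * ‖l - m‖ ^ 2 := by
    refine (Real.abs_rpow_sub_rpow_sub_mul_le hs (norm_nonneg m) (norm_nonneg l)).trans ?_
    have : 0 ≤ s * (s - 1) * M := mul_nonneg (mul_nonneg hs0 (by linarith)) hM0
    exact mul_le_mul_of_nonneg_left
      (sq_le_sq.2 ((abs_norm_sub_norm_le l m).trans (le_abs_self _))) this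
  have hangular : |s * ‖m‖ ^ (s - 2) * (‖m‖ * ‖l‖ - ⟪m, l⟫)| ≤ s / 2 * M * ‖l - m‖ ^ 2 := by
    have hcs : 0 ≤ ‖m‖ * ‖l‖ - ⟪m, l⟫ := sub_nonneg.2 (real_inner_le_norm m l)
    have hM : ‖m‖ ^ (s - 2) ≤ M :=
      Real.rpow_le_rpow (norm_nonneg m) (le_max_left _ _) (by linarith)
    rw [abs_of_nonneg (by positivity)]
    calc s * ‖m‖ ^ (s - 2) * (‖m‖ * ‖l‖ - ⟪m, l⟫) ≤ s * M * (‖m‖ * ‖l‖ - ⟪m, l⟫) := by gcongr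
      _ ≤ s * M * (‖m - l‖ ^ 2 / 2) := by
          gcongr
          linarith [two_mul_norm_mul_norm_sub_inner_le m l]
      _ = s / 2 * M * ‖l - m‖ ^ 2 := by rw [norm_sub_rev]; ring
  calc _ ≤ _ := hsplit ▸ abs_add_le _ _
    _ ≤ s * (s - 1) * M * ‖l - m‖ ^ 2 + s / 2 * M * ‖l - m‖ ^ 2 := add_le_add hradial hangular
    _ = _ := by ring

/-- Lemma 2.9 (third inequality, second-order Taylor-type estimate): for vectors
`l, m ∈ ℝⁿ` and real `r ≥ 4`, there is a constant `C > 0` depending only on `r` with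
`| |l|^{r-2} - |m|^{r-2} - (r-2)|m|^{r-4} ⟨m, l-m⟩ | ≤ C (|l|^{r-4} + |m|^{r-4}) |l-m|²`. -/
theorem stmt3 (r : ℝ) (hr : 4 ≤ r) :
    ∃ C : ℝ, 0 < C ∧ ∀ (n : ℕ) (l m : EuclideanSpace ℝ (Fin n)),
      |‖l‖ ^ (r - 2) - ‖m‖ ^ (r - 2) - (r - 2) * ‖m‖ ^ (r - 4) * ⟪m, l - m⟫|
        ≤ C * (‖l‖ ^ (r - 4) + ‖m‖ ^ (r - 4)) * ‖l - m‖ ^ 2 := by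
  refine ⟨(r - 2) * (2 * (r - 2) - 1) / 2, by nlinarith, fun n l m => ?_⟩
  have h := abs_norm_rpow_sub_norm_rpow_sub_inner_le (s := r - 2) (by linarith) l m
  rw [show r - 2 - 2 = r - 4 by ring] at h
  refine h.trans ?_
  have hmax : max ‖m‖ ‖l‖ ^ (r - 4) ≤ ‖l‖ ^ (r - 4) + ‖m‖ ^ (r - 4) := by
    rw [Real.rpow_max (norm_nonneg m) (norm_nonneg l) (by linarith), add_comm]
    exact max_le_add_of_nonneg (by positivity) (by positivity)
  have : 0 ≤ (r - 2) * (2 * (r - 2) - 1) / 2 := by nlinarith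
  gcongr
end
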